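/- arXiv:0805.0274 — 5 statements merged into one kernel-verified Lean document; each statement's English description precedes it below -/
import Mathlib

section
/- On the homogeneous time scale T = cℤ (c > 0), the nabla-derivative of the delta-monomial satisfies [h_{k+1}(t,t₀)]^∇ = Σ_{j=0}^{k} (−1)^j c^j h_{k−j}(t,t₀), where the nabla-derivative is f^∇(t) = (f(t) − f(t−c))/c. -/
open Finset

/-- Delta monomial on cℤ in closed form. -/
noncomputable def hMono (c : ℝ) (k : ℕ) (t t₀ : ℝ) : ℝ :=
  c ^ k * (descPochhammer ℝ k).eval ((t - t₀) / c) / (Nat.factorial k : ℝ)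

/-! The backward difference of `h_{k+1}` is `h_k` shifted back by one step, as one reads off from
`x⁻^(k+1) - (x-1)⁻^(k+1) = (k+1) (x-1)⁻^k`. Iterating `h_{k+1}(t-c) = h_{k+1}(t) - c h_k(t-c)`
expands the shifted monomial into the alternating sum. -/

theorem descPochhammer_succ_eval_sub_one {R : Type*} [CommRing R] (k : ℕ) (x : R) :
    (descPochhammer R (k + 1)).eval (x - 1)
      = (descPochhammer R (k + 1)).eval x - (k + 1) * (descPochhammer R k).eval (x - 1) := by
  simpa [add_mul, Polynomial.eval_natCast_mul, Polynomial.eval_comp] using congr_arg (Polynomial.eval x) (descPochhammer_succ_comp_X_sub_one R k)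

theorem hMono_succ_sub {c : ℝ} (hc : c ≠ 0) (k : ℕ) (t t₀ : ℝ) :
    hMono c (k + 1) (t - c) t₀ = hMono c (k + 1) t t₀ - c * hMono c k (t - c) t₀ := by
  have harg : (t - c - t₀) / c = (t - t₀) / c - 1 := by field_simp; ring
  simp only [hMono, harg, descPochhammer_succ_eval_sub_one, Nat.factorial_succ]
  push_cast
  field_simp
  ring

theorem hMono_nabla {c : ℝ} (hc : c ≠ 0) (k : ℕ) (t t₀ : ℝ) :
    (hMono c (k + 1) t t₀ - hMono c (k + 1) (t - c) t₀) / c = hMono c k (t - c) t₀ := by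
  rw [hMono_succ_sub hc]
  field_simp
  ring

theorem hMono_sub_eq_sum {c : ℝ} (hc : c ≠ 0) (k : ℕ) (t t₀ : ℝ) :
    hMono c k (t - c) t₀ = ∑ j ∈ range (k + 1), (-1 : ℝ) ^ j * c ^ j * hMono c (k - j) t t₀ := by
  induction k with
  | zero => simp [hMono]
  | succ k ih =>
    rw [hMono_succ_sub hc, ih, sum_range_succ' _ (k + 1), mul_sum]
    simp only [Nat.add_sub_add_right, pow_succ, pow_zero, Nat.sub_zero, one_mul]
    rw [sub_eq_add_neg, add_comm, ← sum_neg_distrib]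
    congr 1
    exact sum_congr rfl fun j _ => by ring

/-- On T = cℤ, the nabla-derivative f^∇(t) = (f(t) − f(t−c))/c of the delta monomial
satisfies [h_{k+1}(t,t₀)]^∇ = Σ_{j=0}^{k} (−1)^j c^j h_{k−j}(t,t₀).
Points t = c·m, t₀ = c·n. -/
theorem stmt6 (c : ℝ) (hc : 0 < c) (k : ℕ) (m n : ℤ) :
    (hMono c (k + 1) (c * m) (c * n) - hMono c (k + 1) (c * m - c) (c * n)) / c
      = ∑ j ∈ Finset.range (k + 1),
          (-1 : ℝ) ^ j * c ^ j * hMono c (k - j) (c * m) (c * n) := by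
  rw [hMono_nabla hc.ne', hMono_sub_eq_sum hc.ne']
end

section
/- On the homogeneous time scale T = cℤ (c > 0), the delta-derivative of the nabla-monomial satisfies [ĥ_{k+1}(t,t₀)]^Δ = Σ_{j=0}^{k} c^j ĥ_{k−j}(t,t₀), where f^Δ(t) = (f(t+c) − f(t))/c. -/
open Finset

/-- Nabla monomial on cℤ in closed form. -/
noncomputable def hHatMono (c : ℝ) (k : ℕ) (t t₀ : ℝ) : ℝ :=
  c ^ k * (ascPochhammer ℝ k).eval ((t - t₀) / c) / (Nat.factorial k : ℝ)

/-!
With `x = (t - t₀) / c`, the nabla monomial is `ĥ_k(t, t₀) = c ^ k * multichoose x k`, and a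
step `t ↦ t + c` shifts `x` by one. Pascal's rule for `multichoose` turns the Δ-difference of
`ĥ_{k+1}` into `c ^ k * multichoose (x + 1) k`, and the hockey-stick identity expands this as
`∑ i ≤ k, c ^ k * multichoose x i`, which is the sum on the right read backwards.
-/

theorem Ring.multichoose_add_one_eq_sum {R : Type*} [NonAssocSemiring R] [Pow R ℕ] [NatPowAssoc R]
    [BinomialRing R] (r : R) (k : ℕ) :
    Ring.multichoose (r + 1) k = ∑ i ∈ range (k + 1), Ring.multichoose r i := by
  induction k with
  | zero => simp
  | succ k ih => rw [Ring.multichoose_succ_succ, ih, sum_range_succ _ (k + 1), add_comm]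

theorem Ring.multichoose_eq_ascPochhammer_eval_div {K : Type*} [Field K] [CharZero K] (x : K)
    (k : ℕ) : Ring.multichoose x k = (ascPochhammer K k).eval x / k.factorial := by
  rw [eq_div_iff (Nat.cast_ne_zero.mpr k.factorial_ne_zero), mul_comm, ← nsmul_eq_mul,
    Ring.factorial_nsmul_multichoose_eq_ascPochhammer, Polynomial.ascPochhammer_smeval_eq_eval]

theorem hHatMono_eq_pow_mul_multichoose (c : ℝ) (k : ℕ) (t t₀ : ℝ) :
    hHatMono c k t t₀ = c ^ k * Ring.multichoose ((t - t₀) / c) k := by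
  rw [hHatMono, Ring.multichoose_eq_ascPochhammer_eval_div, mul_div_assoc]

theorem hHatMono_deltaDeriv {c : ℝ} (hc : c ≠ 0) (k : ℕ) (t t₀ : ℝ) :
    (hHatMono c (k + 1) (t + c) t₀ - hHatMono c (k + 1) t t₀) / c
      = ∑ j ∈ range (k + 1), c ^ j * hHatMono c (k - j) t t₀ := by
  set x := (t - t₀) / c
  have hx : (t + c - t₀) / c = x + 1 := by rw [add_sub_right_comm, add_div, div_self hc]
  have hterm : ∀ j ∈ range (k + 1),
      c ^ j * hHatMono c (k - j) t t₀ = c ^ k * Ring.multichoose x (k - j) := by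
    intro j hj
    rw [hHatMono_eq_pow_mul_multichoose, ← mul_assoc, ← pow_add,
      Nat.add_sub_cancel' (Nat.le_of_lt_succ (mem_range.mp hj))]
  calc (hHatMono c (k + 1) (t + c) t₀ - hHatMono c (k + 1) t t₀) / c
      = c ^ k * Ring.multichoose (x + 1) k := by
        rw [hHatMono_eq_pow_mul_multichoose, hHatMono_eq_pow_mul_multichoose, hx,
          Ring.multichoose_succ_succ]
        field_simp
        ring
    _ = ∑ i ∈ range (k + 1), c ^ k * Ring.multichoose x i := by
        rw [Ring.multichoose_add_one_eq_sum, mul_sum]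
    _ = ∑ j ∈ range (k + 1), c ^ j * hHatMono c (k - j) t t₀ := by
        rw [sum_congr rfl hterm, ← sum_range_reflect]
        simp

/-- On T = cℤ, the delta-derivative f^Δ(t) = (f(t+c) − f(t))/c of the nabla monomial
satisfies [ĥ_{k+1}(t,t₀)]^Δ = Σ_{j=0}^{k} c^j ĥ_{k−j}(t,t₀).
Points t = c·m, t₀ = c·n. -/
theorem stmt7 (c : ℝ) (hc : 0 < c) (k : ℕ) (m n : ℤ) :
    (hHatMono c (k + 1) (c * m + c) (c * n) - hHatMono c (k + 1) (c * m) (c * n)) / c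
      = ∑ j ∈ Finset.range (k + 1),
          c ^ j * hHatMono c (k - j) (c * m) (c * n) :=
  hHatMono_deltaDeriv hc.ne' k _ _
end

section
/- On T = cℤ (c > 0), the diamond-α derivative of the nabla-monomial ĥ_{k+1} satisfies ĥ_{k+1}^{◇α}(t,t₀) = ĥ_k(t,t₀) + α·Σ_{j=1}^{k} c^j ĥ_{k−j}(t,t₀), for every α ∈ [0,1]. -/
/-!
With `x = (t - t₀)/c` and `P_k` the rising-factorial polynomial,
`P_{k+1}(x+1) - P_{k+1}(x) = (k+1) P_k(x+1)`. Hence the forward difference of `ĥ_{k+1}` at `t` is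
`c ĥ_k(t+c)` and the backward one is `c ĥ_k(t)`, so the diamond-α derivative equals
`ĥ_k(t) + α (ĥ_k(t+c) - ĥ_k(t))`. Iterating the forward identity gives the shift formula
`ĥ_k(t+c) = ∑_{j=0}^{k} c^j ĥ_{k-j}(t)`.
-/

open Finset

theorem ascPochhammer_eval_add_one_sub {R : Type*} [CommRing R] (k : ℕ) (x : R) :
    (ascPochhammer R (k + 1)).eval (x + 1) - (ascPochhammer R (k + 1)).eval x
      = (k + 1) * (ascPochhammer R k).eval (x + 1) := by
  have h := congrArg (Polynomial.eval x) (ascPochhammer_succ_comp_X_add_one (S := R) k)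
  simp only [nsmul_eq_mul, Polynomial.eval_add, Polynomial.eval_mul, Polynomial.eval_comp,
    Polynomial.eval_X, Polynomial.eval_one, Polynomial.eval_natCast, Nat.cast_add,
    Nat.cast_one] at h
  linear_combination h

theorem hHatMono_add_sub {c : ℝ} (hc : c ≠ 0) (k : ℕ) (t t₀ : ℝ) :
    hHatMono c (k + 1) (t + c) t₀ - hHatMono c (k + 1) t t₀ = c * hHatMono c k (t + c) t₀ := by
  have hx : (t + c - t₀) / c = (t - t₀) / c + 1 := by field_simp; ring
  have hdiff := ascPochhammer_eval_add_one_sub k ((t - t₀) / c)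
  unfold hHatMono
  rw [hx, Nat.factorial_succ, Nat.cast_mul, Nat.cast_succ]
  generalize (t - t₀) / c = x at hdiff ⊢
  field_simp
  linear_combination c ^ (k + 1) * hdiff

theorem hHatMono_sub_sub {c : ℝ} (hc : c ≠ 0) (k : ℕ) (t t₀ : ℝ) :
    hHatMono c (k + 1) t t₀ - hHatMono c (k + 1) (t - c) t₀ = c * hHatMono c k t t₀ := by
  simpa using hHatMono_add_sub hc k (t - c) t₀

theorem hHatMono_add_eq_sum_range {c : ℝ} (hc : c ≠ 0) (k : ℕ) (t t₀ : ℝ) :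
    hHatMono c k (t + c) t₀ = ∑ j ∈ range (k + 1), c ^ j * hHatMono c (k - j) t t₀ := by
  induction k with
  | zero => simp [hHatMono]
  | succ k ih =>
    rw [sum_range_succ', sub_eq_iff_eq_add.mp (hHatMono_add_sub hc k t t₀), ih, mul_sum]
    simp only [Nat.add_sub_add_right, Nat.sub_zero, pow_succ', mul_assoc]
    ring

theorem hHatMono_add_eq_add_sum_Icc {c : ℝ} (hc : c ≠ 0) (k : ℕ) (t t₀ : ℝ) :
    hHatMono c k (t + c) t₀
      = hHatMono c k t t₀ + ∑ j ∈ Icc 1 k, c ^ j * hHatMono c (k - j) t t₀ := by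
  rw [hHatMono_add_eq_sum_range hc, sum_range_eq_add_Ico _ (by omega : 0 < k + 1),
    Ico_add_one_right_eq_Icc]
  simp

theorem stmt9_general (c : ℝ) (hc : 0 < c) (α : ℝ)
    (k : ℕ) (m n : ℤ) :
    α * ((hHatMono c (k + 1) (c * m + c) (c * n) - hHatMono c (k + 1) (c * m) (c * n)) / c)
      + (1 - α) *
        ((hHatMono c (k + 1) (c * m) (c * n) - hHatMono c (k + 1) (c * m - c) (c * n)) / c)
      = hHatMono c k (c * m) (c * n)
        + α * ∑ j ∈ Finset.Icc 1 k,
            c ^ j * hHatMono c (k - j) (c * m) (c * n) := by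
  have hc₀ : c ≠ 0 := hc.ne'
  rw [hHatMono_add_sub hc₀, hHatMono_sub_sub hc₀, mul_div_cancel_left₀ _ hc₀,
    mul_div_cancel_left₀ _ hc₀, hHatMono_add_eq_add_sum_Icc hc₀]
  ring

/-- On T = cℤ, the diamond-α derivative f^{◇α}(t) = α(f(t+c)−f(t))/c + (1−α)(f(t)−f(t−c))/c
of the nabla monomial satisfies
ĥ_{k+1}^{◇α}(t,t₀) = ĥ_k(t,t₀) + α·Σ_{j=1}^{k} c^j ĥ_{k−j}(t,t₀).
Points t = c·m, t₀ = c·n. -/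
theorem stmt9 (c : ℝ) (hc : 0 < c) (α : ℝ) (hα : α ∈ Set.Icc (0 : ℝ) 1)
    (k : ℕ) (m n : ℤ) :
    α * ((hHatMono c (k + 1) (c * m + c) (c * n) - hHatMono c (k + 1) (c * m) (c * n)) / c)
      + (1 - α) *
        ((hHatMono c (k + 1) (c * m) (c * n) - hHatMono c (k + 1) (c * m - c) (c * n)) / c)
      = hHatMono c k (c * m) (c * n)
        + α * ∑ j ∈ Finset.Icc 1 k,
            c ^ j * hHatMono c (k - j) (c * m) (c * n) :=
  stmt9_general c hc α k m n
end

section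
/- Let T = cℤ with c > 0, t₀ ∈ cℤ, and let (a_k) and (b_k) be real sequences with all terms nonzero such that lim |a_{k+1}/a_k| < 1/c and lim |b_{k+1}/b_k| < 1/c. Then the combined-polynomial series S_α(t,t₀) = α·Σ_{k=0}^{∞} a_k h_k(t,t₀) + (1−α)·Σ_{k=0}^{∞} b_k ĥ_k(t,t₀) converges (both constituent series converge as real number series) for every t ∈ cℤ and every α ∈ [0,1]. -/
/-!
Both monomials obey a first-order recurrence: the ratio of consecutive terms is
`c (x ∓ k) / (k + 1)` with `x = (t - t₀) / c`, whose absolute value tends to `c`. So the ratio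
test applies with limit `L c < 1`, unless a Pochhammer factor vanishes, in which case all later
monomials vanish and the series is a finite sum.
-/

open Filter

open scoped Topology

lemma hMono_succ (c : ℝ) (k : ℕ) (t t₀ : ℝ) :
    hMono c (k + 1) t t₀ = hMono c k t t₀ * (c * ((t - t₀) / c - k) / (k + 1)) := by
  simp only [hMono, descPochhammer_succ_eval, Nat.factorial_succ, pow_succ]
  push_cast
  field_simp

lemma hHatMono_succ (c : ℝ) (k : ℕ) (t t₀ : ℝ) :
    hHatMono c (k + 1) t t₀ = hHatMono c k t t₀ * (c * ((t - t₀) / c + k) / (k + 1)) := by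
  simp only [hHatMono, ascPochhammer_succ_eval, Nat.factorial_succ, pow_succ]
  push_cast
  field_simp

lemma tendsto_abs_mul_add_natCast_div_succ (c x : ℝ) :
    Tendsto (fun k : ℕ => |c * (x + k) / (k + 1)|) atTop (𝓝 |c|) := by
  have hlin : Tendsto (fun k : ℕ => c + c * (x - 1) * (1 / ((k : ℝ) + 1))) atTop (𝓝 c) := by
    simpa using (tendsto_one_div_add_atTop_nhds_zero_nat.const_mul (c * (x - 1))).const_add c
  refine ((continuous_abs.tendsto c).comp hlin).congr fun k => ?_
  have hk : (k : ℝ) + 1 ≠ 0 := by positivity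
  simp only [Function.comp_apply]
  congr 1
  field_simp
  ring

lemma summable_of_eq_zero_of_mul_recurrence {g r : ℕ → ℝ} (hg : ∀ k, g (k + 1) = g k * r k)
    {k₀ : ℕ} (hk₀ : g k₀ = 0) (a : ℕ → ℝ) : Summable (fun k => a k * g k) := by
  have hzero : ∀ k, k₀ ≤ k → g k = 0 := by
    intro k hk
    induction k, hk using Nat.le_induction with
    | base => exact hk₀
    | succ k _ ih => rw [hg k, ih, zero_mul]
  refine summable_of_ne_finset_zero (s := Finset.range k₀) fun k hk => ?_
  rw [hzero k (by simpa using hk), mul_zero]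

lemma summable_mul_of_tendsto_abs_ratio {a g r : ℕ → ℝ} {L M : ℝ} (ha : ∀ k, a k ≠ 0)
    (hL : Tendsto (fun k => |a (k + 1) / a k|) atTop (𝓝 L))
    (hg : ∀ k, g (k + 1) = g k * r k) (hM : Tendsto (fun k => |r k|) atTop (𝓝 M))
    (hLM : L * M < 1) : Summable (fun k => a k * g k) := by
  by_cases hz : ∃ k₀, g k₀ = 0
  · obtain ⟨k₀, hk₀⟩ := hz
    exact summable_of_eq_zero_of_mul_recurrence hg hk₀ a
  push Not at hz
  refine summable_of_ratio_test_tendsto_lt_one hLM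
    (.of_forall fun k => mul_ne_zero (ha k) (hz k)) ((hL.mul hM).congr fun k => ?_)
  rw [hg k, Real.norm_eq_abs, Real.norm_eq_abs, abs_div, abs_mul, abs_mul, abs_mul]
  field_simp [abs_ne_zero.mpr (ha k), abs_ne_zero.mpr (hz k)]

/-- On T = cℤ: if (a_k), (b_k) have nonzero terms with lim|a_{k+1}/a_k| < 1/c and
lim|b_{k+1}/b_k| < 1/c, then both series of the combined-polynomial series
S_α(t,t₀) = α Σ a_k h_k(t,t₀) + (1−α) Σ b_k ĥ_k(t,t₀) converge for every t ∈ cℤ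
and every α ∈ [0,1].  Points t = c·m, t₀ = c·n. -/
theorem stmt14 (c : ℝ) (hc : 0 < c) (n : ℤ) (a b : ℕ → ℝ)
    (ha0 : ∀ k, a k ≠ 0) (hb0 : ∀ k, b k ≠ 0) (La Lb : ℝ)
    (hLa : Tendsto (fun k : ℕ => |a (k + 1) / a k|) atTop (nhds La))
    (hLa' : La < 1 / c)
    (hLb : Tendsto (fun k : ℕ => |b (k + 1) / b k|) atTop (nhds Lb))
    (hLb' : Lb < 1 / c) :
    ∀ (m : ℤ) (α : ℝ), α ∈ Set.Icc (0 : ℝ) 1 →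
      Summable (fun k : ℕ => a k * hMono c k (c * m) (c * n)) ∧
      Summable (fun k : ℕ => b k * hHatMono c k (c * m) (c * n)) := by
  intro m _ _
  have hratio_lt_one (L : ℝ) (hL : L < 1 / c) : L * |c| < 1 := by
    rwa [abs_of_pos hc, ← lt_div_iff₀ hc]
  refine ⟨summable_mul_of_tendsto_abs_ratio ha0 hLa (hMono_succ c · _ _) ?_ (hratio_lt_one La hLa'),
    summable_mul_of_tendsto_abs_ratio hb0 hLb (hHatMono_succ c · _ _)
      (tendsto_abs_mul_add_natCast_div_succ c _) (hratio_lt_one Lb hLb')⟩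
  rw [← abs_neg c]
  refine (tendsto_abs_mul_add_natCast_div_succ (-c) (-((c * m - c * n) / c))).congr fun k => ?_
  congr 1
  ring
end

section
/- Let M > 0, t₀ ∈ cℤ (c > 0), and (a_k) a real sequence with |a_k| ≤ M^k for all k. Assume cM < 1. Then for every t ∈ cℤ with t − c ≥ t₀, the series F(t) = Σ_{k=0}^{∞} a_k h_k(t,t₀) converges, and its nabla-derivative satisfies F^∇(t) = Σ_{k=0}^{∞} (Σ_{j=0}^{∞} (−1)^j c^j a_{j+k+1}) h_k(t,t₀), where both the inner and outer series converge. -/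
open Finset

theorem Finset.sum_range_mul_pow_mul_choose_succ {R : Type*} [CommRing R] (f : ℕ → R) (x : R)
    (P : ℕ) :
    ∑ k ∈ range (P + 2), f k * (x ^ k * ((P + 1).choose k : R)) =
      ∑ k ∈ range (P + 1), (f k + x * f (k + 1)) * (x ^ k * (P.choose k : R)) := by
  have h := sum_choose_succ_mul (fun i _ => f i * x ^ i) P
  rw [← sum_add_distrib] at h
  convert h using 1 <;> exact sum_congr rfl fun k _ => by ring

theorem hMono_add_mul_natCast {c : ℝ} (hc : c ≠ 0) (k N : ℕ) (t₀ : ℝ) :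
    hMono c k (t₀ + c * N) t₀ = c ^ k * (N.choose k : ℝ) := by
  rw [hMono, add_sub_cancel_left, mul_div_cancel_left₀ _ hc,
    descPochhammer_eval_eq_descFactorial, Nat.descFactorial_eq_factorial_mul_choose]
  have hk : (k.factorial : ℝ) ≠ 0 := by exact_mod_cast k.factorial_ne_zero
  push_cast
  field_simp

theorem hasSum_mul_hMono {c : ℝ} (hc : c ≠ 0) (f : ℕ → ℝ) (t₀ : ℝ) (N : ℕ) :
    HasSum (fun k => f k * hMono c k (t₀ + c * N) t₀)
      (∑ k ∈ range (N + 1), f k * (c ^ k * (N.choose k : ℝ))) := by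
  simp only [hMono_add_mul_natCast hc]
  refine hasSum_sum_of_ne_finset_zero fun k hk => ?_
  rw [Nat.choose_eq_zero_of_lt (by simpa using hk), Nat.cast_zero, mul_zero, mul_zero]

theorem summable_neg_one_pow_mul_pow_mul_shift {a : ℕ → ℝ} {c M : ℝ} (hc : 0 ≤ c)
    (hcM : c * M < 1) (ha : ∀ k, |a k| ≤ M ^ k) (i : ℕ) :
    Summable fun j => (-1 : ℝ) ^ j * c ^ j * a (j + i) := by
  have hM : 0 ≤ M := (abs_nonneg _).trans (by simpa using ha 1)
  refine ((summable_geometric_of_lt_one (by positivity) hcM).mul_right (M ^ i)).of_norm_bounded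
    fun j => ?_
  calc ‖(-1 : ℝ) ^ j * c ^ j * a (j + i)‖ = c ^ j * |a (j + i)| := by
        simp [abs_of_nonneg hc]
    _ ≤ c ^ j * M ^ (j + i) := by gcongr; exact ha _
    _ = (c * M) ^ j * M ^ i := by ring

-- An `abbrev`, so that `rw` also finds it in the unfolded inner series of `stmt15`.
noncomputable abbrev nablaCoeff (c : ℝ) (a : ℕ → ℝ) (k : ℕ) : ℝ :=
  ∑' j : ℕ, (-1 : ℝ) ^ j * c ^ j * a (j + k + 1)

theorem nablaCoeff_add_mul_nablaCoeff_succ {c : ℝ} {a : ℕ → ℝ} {k : ℕ}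
    (h : Summable fun j => (-1 : ℝ) ^ j * c ^ j * a (j + k + 1)) :
    nablaCoeff c a k + c * nablaCoeff c a (k + 1) = a (k + 1) := by
  rw [nablaCoeff, h.tsum_eq_zero_add, nablaCoeff, ← tsum_mul_left]
  have hshift : ∀ j, (-1 : ℝ) ^ (j + 1) * c ^ (j + 1) * a (j + 1 + k + 1)
      = -(c * ((-1 : ℝ) ^ j * c ^ j * a (j + (k + 1) + 1))) := fun j => by
    rw [show j + 1 + k + 1 = j + (k + 1) + 1 by omega]; ring
  simp only [hshift, tsum_neg, pow_zero, one_mul, zero_add]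
  ring

theorem stmt15_general (c M : ℝ) (hc : 0 < c) (hcM : c * M < 1)
    (n : ℤ) (a : ℕ → ℝ) (ha : ∀ k, |a k| ≤ M ^ k)
    (m : ℤ) (hm : c * (m : ℝ) - c ≥ c * (n : ℝ)) :
    Summable (fun k : ℕ => a k * hMono c k (c * m) (c * n)) ∧
    (∀ k : ℕ, Summable (fun j : ℕ => (-1 : ℝ) ^ j * c ^ j * a (j + k + 1))) ∧
    Summable (fun k : ℕ =>
      (∑' j : ℕ, (-1 : ℝ) ^ j * c ^ j * a (j + k + 1)) * hMono c k (c * m) (c * n)) ∧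
    ((∑' k : ℕ, a k * hMono c k (c * m) (c * n))
        - (∑' k : ℕ, a k * hMono c k (c * m - c) (c * n))) / c
      = ∑' k : ℕ,
          (∑' j : ℕ, (-1 : ℝ) ^ j * c ^ j * a (j + k + 1))
            * hMono c k (c * m) (c * n) := by
  have hinner (k : ℕ) := summable_neg_one_pow_mul_pow_mul_shift hc.le hcM ha (k + 1)
  obtain ⟨P, hP⟩ : ∃ P : ℕ, m = n + P + 1 := by
    have : n + 1 ≤ m := by exact_mod_cast (by nlinarith : (n : ℝ) + 1 ≤ m)
    exact ⟨(m - n - 1).toNat, by omega⟩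
  have ht : c * (m : ℝ) = c * n + c * ((P + 1 : ℕ) : ℝ) := by rw [hP]; push_cast; ring
  have ht' : c * (m : ℝ) - c = c * n + c * (P : ℝ) := by rw [hP]; push_cast; ring
  have hF := hasSum_mul_hMono hc.ne' a (c * n) (P + 1)
  have hG := hasSum_mul_hMono hc.ne' (nablaCoeff c a) (c * n) (P + 1)
  rw [ht', ht]
  refine ⟨hF.summable, hinner, hG.summable, ?_⟩
  rw [hF.tsum_eq, (hasSum_mul_hMono hc.ne' a (c * n) P).tsum_eq, hG.tsum_eq,
    sum_range_mul_pow_mul_choose_succ, sum_range_mul_pow_mul_choose_succ, ← sum_sub_distrib,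
    div_eq_iff hc.ne', sum_mul]
  refine sum_congr rfl fun k _ => ?_
  rw [nablaCoeff_add_mul_nablaCoeff_succ (hinner k)]
  ring

/-- On T = cℤ with |a_k| ≤ M^k and cM < 1: for t − c ≥ t₀, the series
F(t) = Σ_k a_k h_k(t,t₀) converges and its nabla-derivative
(F(t) − F(t−c))/c equals Σ_k (Σ_j (−1)^j c^j a_{j+k+1}) h_k(t,t₀),
all inner and outer series converging. -/
theorem stmt15 (c M : ℝ) (hc : 0 < c) (hM : 0 < M) (hcM : c * M < 1)
    (n : ℤ) (a : ℕ → ℝ) (ha : ∀ k, |a k| ≤ M ^ k)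
    (m : ℤ) (hm : c * (m : ℝ) - c ≥ c * (n : ℝ)) :
    Summable (fun k : ℕ => a k * hMono c k (c * m) (c * n)) ∧
    (∀ k : ℕ, Summable (fun j : ℕ => (-1 : ℝ) ^ j * c ^ j * a (j + k + 1))) ∧
    Summable (fun k : ℕ =>
      (∑' j : ℕ, (-1 : ℝ) ^ j * c ^ j * a (j + k + 1)) * hMono c k (c * m) (c * n)) ∧
    ((∑' k : ℕ, a k * hMono c k (c * m) (c * n))
        - (∑' k : ℕ, a k * hMono c k (c * m - c) (c * n))) / c
      = ∑' k : ℕ,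
          (∑' j : ℕ, (-1 : ℝ) ^ j * c ^ j * a (j + k + 1))
            * hMono c k (c * m) (c * n) :=
  stmt15_general c M hc hcM n a ha m hm
end
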